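/- Let H be a set of gauges in ℝ^N that is a cone (closed under Minkowski addition and nonnegative dilation), is closed in the Hausdorff metric, and contains K ∩ L whenever K, L ∈ H. Assume that for every nonzero y ∈ ℝ^N one has h_S(y) > 0 for every nonzero S ∈ H and that the set S_y := ⋂_{S ∈ H, S ≠ {0}} (1/h_S(y))·S is absorbing. Then for all vectors y, x_1, …, x_n ∈ ℝ^N the following are equivalent: (a) Σ_{k=1}^n h_S(x_k) ≥ h_S(y) for every gauge S ∈ H; (b) there exist vectors z_1, …, z_n ∈ ℝ^N with z_1 + ⋯ + z_n = y such that h_S(x_k) ≥ h_S(z_k) for every S ∈ H and every k = 1, …, n. -/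

import Mathlib

/-!
The implication (b) ⇒ (a) is subadditivity of support functions. For (a) ⇒ (b) let `C_k` be the
set of `z` with `h_T(z) ≤ h_T(x_k)` for all `T ∈ H`; a nonzero `T₀ ∈ H` contains a ball around `0`
(its support function is positive on the unit sphere), so `C_k` is compact and convex, and it
suffices to show `⟪v, y⟫ ≤ ∑ h_{C_k}(v)` for every `v`. The key duality is that `h_{C_k}(v)` is the
infimum of `h_T(x_k)` over the `T ∈ H` containing `v`: separate `(v, h_{C_k}(v))` from the
closure of the convex cone `{(p, t) | p ∈ T ∈ H, h_T(x_k) ≤ t}` in `ℝ^N × ℝ`, into whose interior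
the ball in `T₀` lifts. Given such `T_k` with `h_{T_k}(x_k) ≤ h_{C_k}(v) + ε`, the meet
`T = ⋂ T_k` lies in `H` and `⟪v, y⟫ ≤ h_T(y) ≤ ∑ h_T(x_k) ≤ ∑ h_{C_k}(v) + nε`.
-/

open Pointwise

/-- The support function `h_K(x) = sup{⟨x, y⟩ : y ∈ K}` of `K ⊆ ℝ^N`. -/
noncomputable def suppFn {N : ℕ} (K : Set (EuclideanSpace ℝ (Fin N)))
    (x : EuclideanSpace ℝ (Fin N)) : ℝ :=
  sSup ((fun y => (inner ℝ x y : ℝ)) '' K)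

/-- A gauge in `ℝ^N`: a compact convex set containing the origin. -/
def IsGauge {N : ℕ} (K : Set (EuclideanSpace ℝ (Fin N))) : Prop :=
  IsCompact K ∧ Convex ℝ K ∧ (0 : EuclideanSpace ℝ (Fin N)) ∈ K

/-- A family of gauges is nondegenerate if `sup_ξ ‖A‖_{S_ξ} < +∞` for every
linear operator `A` on `ℝ^N`, i.e. there is `C` such that for each `ξ` and each
`x ∈ S ξ` the gauge value `‖A x‖_{S ξ} = inf{β > 0 : A x ∈ β • S ξ}` is
attained below `C`. -/
def Nondegenerate {N : ℕ} {Ξ : Type*}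
    (S : Ξ → Set (EuclideanSpace ℝ (Fin N))) : Prop :=
  ∀ A : EuclideanSpace ℝ (Fin N) →ₗ[ℝ] EuclideanSpace ℝ (Fin N),
    ∃ C : ℝ, ∀ ξ, ∀ x ∈ S ξ, ∃ β : ℝ, 0 < β ∧ β ≤ C ∧ A x ∈ β • S ξ

/-- Closedness of a collection of (nonempty compact) subsets of `ℝ^N` in the
topology of the Hausdorff metric. -/
def IsHausdorffClosed {N : ℕ} (C : Set (Set (EuclideanSpace ℝ (Fin N)))) : Prop :=
  IsClosed {K : TopologicalSpace.NonemptyCompacts (EuclideanSpace ℝ (Fin N)) |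
    (K : Set (EuclideanSpace ℝ (Fin N))) ∈ C}

/-- `π↑(F)`: the least Hausdorff-closed cone of gauges containing `F` that is
closed under the join `K ∨ L = conv (K ∪ L)`. -/
def piUp {N : ℕ} (F : Set (Set (EuclideanSpace ℝ (Fin N)))) :
    Set (Set (EuclideanSpace ℝ (Fin N))) :=
  ⋂₀ {C | (∀ K ∈ C, IsGauge K) ∧ IsHausdorffClosed C ∧ F ⊆ C ∧
      (∀ K ∈ C, ∀ L ∈ C, K + L ∈ C) ∧
      (∀ K ∈ C, ∀ α : ℝ, 0 ≤ α → α • K ∈ C) ∧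
      (∀ K ∈ C, ∀ L ∈ C, convexHull ℝ (K ∪ L) ∈ C)}

/-- `π↓(F)`: the least Hausdorff-closed cone of gauges containing `F` that is
closed under the meet `K ∧ L = K ∩ L`. -/
def piDown {N : ℕ} (F : Set (Set (EuclideanSpace ℝ (Fin N)))) :
    Set (Set (EuclideanSpace ℝ (Fin N))) :=
  ⋂₀ {C | (∀ K ∈ C, IsGauge K) ∧ IsHausdorffClosed C ∧ F ⊆ C ∧
      (∀ K ∈ C, ∀ L ∈ C, K + L ∈ C) ∧
      (∀ K ∈ C, ∀ α : ℝ, 0 ≤ α → α • K ∈ C) ∧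
      (∀ K ∈ C, ∀ L ∈ C, K ∩ L ∈ C)}

/-- `π(F)`: the least Hausdorff-closed cone of gauges containing `F` that is
closed under both the join and the meet. -/
def piBoth {N : ℕ} (F : Set (Set (EuclideanSpace ℝ (Fin N)))) :
    Set (Set (EuclideanSpace ℝ (Fin N))) :=
  ⋂₀ {C | (∀ K ∈ C, IsGauge K) ∧ IsHausdorffClosed C ∧ F ⊆ C ∧
      (∀ K ∈ C, ∀ L ∈ C, K + L ∈ C) ∧
      (∀ K ∈ C, ∀ α : ℝ, 0 ≤ α → α • K ∈ C) ∧
      (∀ K ∈ C, ∀ L ∈ C, convexHull ℝ (K ∪ L) ∈ C) ∧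
      (∀ K ∈ C, ∀ L ∈ C, K ∩ L ∈ C)}

open Set Metric RealInnerProductSpace

theorem isCompact_finsetSum {ι M : Type*} [AddCommMonoid M] [TopologicalSpace M] [ContinuousAdd M]
    (s : Finset ι) {C : ι → Set M} (hC : ∀ k ∈ s, IsCompact (C k)) : IsCompact (∑ k ∈ s, C k) :=
  Finset.sum_induction _ IsCompact (fun _ _ => IsCompact.add) isCompact_singleton hC

theorem iInter_mem_of_inter_mem {α ι : Type*} [Fintype ι] [Nonempty ι] {H : Set (Set α)}
    (hmeet : ∀ K ∈ H, ∀ L ∈ H, K ∩ L ∈ H) {T : ι → Set α} (hT : ∀ k, T k ∈ H) :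
    ⋂ k, T k ∈ H := by
  change iInf T ∈ H
  rw [← Finset.inf_univ_eq_iInf, ← Finset.inf'_eq_inf Finset.univ_nonempty]
  exact Finset.inf'_induction _ _ hmeet fun k _ => hT k

section Cone

variable {F : Type*} [AddCommGroup F] [Module ℝ F] [TopologicalSpace F] [IsTopologicalAddGroup F]
  [ContinuousSMul ℝ F] {s : Set F}

theorem Convex.add_mem_of_mem_closure_of_mem_interior (hs : Convex ℝ s)
    (hcone : ∀ c : ℝ, 0 < c → ∀ a ∈ s, c • a ∈ s) {a b : F} (ha : a ∈ closure s)
    (hb : b ∈ interior s) : a + b ∈ s := by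
  have hmid : (1 / 2 : ℝ) • a + (1 / 2 : ℝ) • b ∈ s := interior_subset <|
    hs.combo_closure_interior_mem_interior ha hb (by norm_num) (by norm_num) (by norm_num)
  simpa [smul_add, smul_smul] using hcone 2 two_pos _ hmid

theorem Convex.exists_nonpos_pos_of_notMem_closure [LocallyConvexSpace ℝ F] (hs : Convex ℝ s)
    (hcone : ∀ c : ℝ, 0 < c → ∀ a ∈ s, c • a ∈ s) (h0 : 0 ∈ s) {p : F} (hp : p ∉ closure s) :
    ∃ f : StrongDual ℝ F, (∀ a ∈ s, f a ≤ 0) ∧ 0 < f p := by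
  obtain ⟨f, c, hfs, hfp⟩ := geometric_hahn_banach_closed_point hs.closure isClosed_closure hp
  have hc : 0 < c := by simpa using hfs 0 (subset_closure h0)
  refine ⟨f, fun a ha => not_lt.1 fun hfa => ?_, hc.trans hfp⟩
  have := hfs _ (subset_closure (hcone (c / f a) (div_pos hc hfa) a ha))
  rw [map_smul, smul_eq_mul, div_mul_cancel₀ _ hfa.ne'] at this
  exact lt_irrefl _ this

end Cone

section SupportFunction

variable {N : ℕ}
local notation "E" => EuclideanSpace ℝ (Fin N)
variable {T T' s : Set (EuclideanSpace ℝ (Fin N))}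

theorem bddAbove_inner_image (hT : IsCompact T) (x : E) :
    BddAbove ((fun p => ⟪x, p⟫) '' T) :=
  (hT.image (continuous_const.inner continuous_id)).bddAbove

theorem inner_le_suppFn (hT : IsCompact T) {p : E} (hp : p ∈ T) (x : E) : ⟪x, p⟫ ≤ suppFn T x :=
  le_csSup (bddAbove_inner_image hT x) (mem_image_of_mem _ hp)

theorem suppFn_le (hne : T.Nonempty) {x : E} {c : ℝ} (h : ∀ p ∈ T, ⟪x, p⟫ ≤ c) : suppFn T x ≤ c :=
  csSup_le (hne.image _) (forall_mem_image.2 h)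

theorem exists_inner_eq_suppFn (hT : IsCompact T) (hne : T.Nonempty) (x : E) :
    ∃ p ∈ T, ⟪x, p⟫ = suppFn T x :=
  (hT.image (continuous_const.inner continuous_id)).sSup_mem (hne.image _)

theorem suppFn_mono (hT' : IsCompact T') (hTT' : T ⊆ T') (hne : T.Nonempty) (x : E) :
    suppFn T x ≤ suppFn T' x :=
  csSup_le_csSup (bddAbove_inner_image hT' x) (hne.image _) (image_mono hTT')

theorem suppFn_nonneg (hT : IsCompact T) (h0 : 0 ∈ T) (x : E) : 0 ≤ suppFn T x := by
  simpa using inner_le_suppFn hT h0 x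

theorem suppFn_zero (hne : T.Nonempty) : suppFn T 0 = 0 := by
  simp only [suppFn, inner_zero_left, hne.image_const]
  exact csSup_singleton 0

theorem suppFn_singleton_zero (x : E) : suppFn {0} x = 0 := by
  simp [suppFn]

theorem suppFn_smul {c : ℝ} (hc : 0 ≤ c) (x : E) :
    suppFn T (c • x) = c * suppFn T x := by
  simp only [suppFn, real_inner_smul_left]
  rw [← smul_eq_mul, ← Real.sSup_smul_of_nonneg hc, ← image_smul, image_image]
  rfl

theorem suppFn_smul_set {c : ℝ} (hc : 0 ≤ c) (x : E) :
    suppFn (c • T) x = c * suppFn T x := by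
  simp only [suppFn]
  rw [← smul_eq_mul, ← Real.sSup_smul_of_nonneg hc, ← image_smul, image_image, ← image_smul,
    image_image]
  simp only [real_inner_smul_right, smul_eq_mul]

theorem suppFn_add_set (hT : IsCompact T) (hne : T.Nonempty) (hT' : IsCompact T')
    (hne' : T'.Nonempty) (x : E) : suppFn (T + T') x = suppFn T x + suppFn T' x := by
  change sSup (innerSL ℝ x '' (T + T')) = sSup (innerSL ℝ x '' T) + sSup (innerSL ℝ x '' T')
  rw [image_add]
  exact csSup_add (hne.image _) (bddAbove_inner_image hT x) (hne'.image _)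
    (bddAbove_inner_image hT' x)

theorem suppFn_add_le (hT : IsCompact T) (hne : T.Nonempty) (x y : E) :
    suppFn T (x + y) ≤ suppFn T x + suppFn T y :=
  suppFn_le hne fun p hp => by
    rw [inner_add_left]
    exact add_le_add (inner_le_suppFn hT hp x) (inner_le_suppFn hT hp y)

theorem convexOn_suppFn (hT : IsCompact T) (hne : T.Nonempty) : ConvexOn ℝ univ (suppFn T) :=
  ⟨convex_univ, fun x _ y _ a b ha hb _ => by
    simpa only [smul_eq_mul, suppFn_smul ha, suppFn_smul hb] using
      suppFn_add_le hT hne (a • x) (b • y)⟩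

theorem continuous_suppFn (hT : IsCompact T) (hne : T.Nonempty) : Continuous (suppFn T) := by
  obtain ⟨R, hR⟩ := hT.isBounded.subset_closedBall 0
  refine (LipschitzWith.of_le_add_mul' R fun z w => ?_).continuous
  have hdiff : suppFn T (z - w) ≤ R * dist z w := suppFn_le hne fun p hp => calc
    ⟪z - w, p⟫ ≤ ‖z - w‖ * ‖p‖ := real_inner_le_norm _ _
    _ ≤ dist z w * R := by
      rw [dist_eq_norm]; gcongr; simpa using hR hp
    _ = R * dist z w := mul_comm _ _
  calc suppFn T z = suppFn T (w + (z - w)) := by rw [add_sub_cancel]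
    _ ≤ suppFn T w + R * dist z w := (suppFn_add_le hT hne _ _).trans (by linarith)

theorem exists_pos_mul_norm_le_suppFn (hT : IsCompact T) (hne : T.Nonempty)
    (hpos : ∀ d ≠ 0, 0 < suppFn T d) : ∃ r > 0, ∀ z, r * ‖z‖ ≤ suppFn T z := by
  obtain ⟨r, hr, hle⟩ := (isCompact_sphere (0 : E) 1).exists_forall_le'
    (continuous_suppFn hT hne).continuousOn fun d hd => hpos d (ne_of_mem_sphere hd one_ne_zero)
  refine ⟨r, hr, fun z => ?_⟩
  rcases eq_or_ne z 0 with rfl | hz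
  · simp [suppFn_zero hne]
  · have hz' := norm_pos_iff.2 hz
    have := hle (‖z‖⁻¹ • z) (by simp [norm_smul, hz])
    rwa [suppFn_smul (inv_nonneg.2 hz'.le), le_inv_mul_iff₀ hz', mul_comm] at this

theorem mem_of_forall_inner_le_suppFn (hs : Convex ℝ s) (hc : IsClosed s) (hne : s.Nonempty)
    {q : E} (h : ∀ v, ⟪v, q⟫ ≤ suppFn s v) : q ∈ s := by
  by_contra hq
  obtain ⟨f, c, hfs, hfq⟩ := geometric_hahn_banach_closed_point hs hc hq
  have hle : suppFn s ((InnerProductSpace.toDual ℝ E).symm f) ≤ c :=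
    suppFn_le hne fun p hp => by simpa using (hfs p hp).le
  have := h ((InnerProductSpace.toDual ℝ E).symm f)
  rw [InnerProductSpace.toDual_symm_apply] at this
  linarith

theorem closedBall_subset_of_mul_norm_le_suppFn (hs : Convex ℝ s) (hc : IsClosed s)
    (hne : s.Nonempty) {r : ℝ} (h : ∀ z, r * ‖z‖ ≤ suppFn s z) : closedBall 0 r ⊆ s :=
  fun q hq => mem_of_forall_inner_le_suppFn hs hc hne fun v => calc
    ⟪v, q⟫ ≤ ‖v‖ * ‖q‖ := real_inner_le_norm v q
    _ ≤ ‖v‖ * r := by gcongr; exact mem_closedBall_zero_iff.1 hq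
    _ ≤ suppFn s v := by rw [mul_comm]; exact h v

theorem sum_suppFn_le_suppFn_sum {ι : Type*} [Fintype ι] {C : ι → Set E}
    (hC : ∀ k, IsCompact (C k)) (hne : ∀ k, (C k).Nonempty) (v : E) :
    ∑ k, suppFn (C k) v ≤ suppFn (∑ k, C k) v := by
  choose w hw hwv using fun k => exists_inner_eq_suppFn (hC k) (hne k) v
  calc ∑ k, suppFn (C k) v = ⟪v, ∑ k, w k⟫ := by simp only [inner_sum, hwv]
    _ ≤ suppFn (∑ k, C k) v := inner_le_suppFn (isCompact_finsetSum _ fun k _ => hC k)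
        ((mem_fintype_sum _ _).2 ⟨w, hw, rfl⟩) v

end SupportFunction

section GaugeCone

variable {N : ℕ}
local notation "E" => EuclideanSpace ℝ (Fin N)

structure IsGaugeCone (H : Set (Set (EuclideanSpace ℝ (Fin N)))) : Prop where
  isGauge : ∀ K ∈ H, IsGauge K
  add_mem : ∀ K ∈ H, ∀ L ∈ H, K + L ∈ H
  smul_mem : ∀ K ∈ H, ∀ α : ℝ, 0 ≤ α → α • K ∈ H

variable {H : Set (Set (EuclideanSpace ℝ (Fin N)))} {T₀ : Set (EuclideanSpace ℝ (Fin N))}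

theorem IsGaugeCone.singleton_zero_mem (hH : IsGaugeCone H) (hT₀ : T₀ ∈ H) : {0} ∈ H := by
  have h := hH.smul_mem T₀ hT₀ 0 le_rfl
  rwa [zero_smul_set ⟨0, (hH.isGauge T₀ hT₀).2.2⟩] at h

def dominated (H : Set (Set E)) (x : E) : Set E :=
  {z | ∀ T ∈ H, suppFn T z ≤ suppFn T x}

theorem zero_mem_dominated (hg : ∀ T ∈ H, IsGauge T) (x : E) : 0 ∈ dominated H x :=
  fun T hT => by
    obtain ⟨hTc, -, hT0⟩ := hg T hT
    rw [suppFn_zero ⟨0, hT0⟩]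
    exact suppFn_nonneg hTc hT0 x

theorem convex_dominated (hg : ∀ T ∈ H, IsGauge T) (x : E) : Convex ℝ (dominated H x) := by
  intro z hz w hw a b ha hb hab T hT
  obtain ⟨hTc, -, hT0⟩ := hg T hT
  calc suppFn T (a • z + b • w) ≤ a * suppFn T z + b * suppFn T w :=
        (convexOn_suppFn hTc ⟨0, hT0⟩).2 trivial trivial ha hb hab
    _ ≤ a * suppFn T x + b * suppFn T x := by gcongr; exacts [hz T hT, hw T hT]
    _ = suppFn T x := by rw [← add_mul, hab, one_mul]

theorem isCompact_dominated (hg : ∀ T ∈ H, IsGauge T) (hT₀ : T₀ ∈ H)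
    (hpos : ∀ d ≠ 0, 0 < suppFn T₀ d) (x : E) : IsCompact (dominated H x) := by
  obtain ⟨hT₀c, -, hT₀0⟩ := hg T₀ hT₀
  obtain ⟨r, hr, hT₀r⟩ := exists_pos_mul_norm_le_suppFn hT₀c ⟨0, hT₀0⟩ hpos
  refine isCompact_of_isClosed_isBounded ?_ ((isBounded_closedBall
    (x := 0) (r := suppFn T₀ x / r)).subset fun z hz => ?_)
  · simp only [dominated, ofPred_forall]
    refine isClosed_iInter fun T => isClosed_iInter fun hT => ?_
    obtain ⟨hTc, -, hT0⟩ := hg T hT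
    exact isClosed_le (continuous_suppFn hTc ⟨0, hT0⟩) continuous_const
  · rw [mem_closedBall_zero_iff, le_div_iff₀ hr, mul_comm]
    exact (hT₀r z).trans (hz T₀ hT₀)

def supportCone (H : Set (Set E)) (x : E) : Set (E × ℝ) :=
  {p | ∃ T ∈ H, p.1 ∈ T ∧ suppFn T x ≤ p.2}

theorem convex_supportCone (hH : IsGaugeCone H) (x : E) : Convex ℝ (supportCone H x) := by
  rintro ⟨p, s⟩ ⟨T, hT, hpT, hTs⟩ ⟨q, t⟩ ⟨T', hT', hqT', hT't⟩ a b ha hb hab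
  obtain ⟨hTc, -, hT0⟩ := hH.isGauge T hT
  obtain ⟨hT'c, -, hT'0⟩ := hH.isGauge T' hT'
  refine ⟨a • T + b • T', hH.add_mem _ (hH.smul_mem T hT a ha) _ (hH.smul_mem T' hT' b hb),
    add_mem_add (smul_mem_smul_set hpT) (smul_mem_smul_set hqT'), ?_⟩
  rw [suppFn_add_set (hTc.smul a) ⟨0, by simpa using smul_mem_smul_set (a := a) hT0⟩
    (hT'c.smul b) ⟨0, by simpa using smul_mem_smul_set (a := b) hT'0⟩, suppFn_smul_set ha,
    suppFn_smul_set hb]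
  simp only [Prod.snd_add, Prod.smul_snd, smul_eq_mul]
  gcongr

theorem smul_mem_supportCone (hH : IsGaugeCone H) {x : E} {c : ℝ} (hc : 0 ≤ c)
    {p : E × ℝ} (hp : p ∈ supportCone H x) : c • p ∈ supportCone H x := by
  obtain ⟨T, hT, hpT, hTp⟩ := hp
  refine ⟨c • T, hH.smul_mem T hT c hc, smul_mem_smul_set hpT, ?_⟩
  rw [suppFn_smul_set hc, Prod.smul_snd, smul_eq_mul]
  gcongr

theorem zero_mem_supportCone (hH : IsGaugeCone H) (hT₀ : T₀ ∈ H) {x : E} {t : ℝ} (ht : 0 ≤ t) :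
    ((0 : E), t) ∈ supportCone H x :=
  ⟨{0}, hH.singleton_zero_mem hT₀, rfl, by rwa [suppFn_singleton_zero]⟩

theorem mem_interior_supportCone (hH : IsGaugeCone H) (hT₀ : T₀ ∈ H)
    (hpos : ∀ d ≠ 0, 0 < suppFn T₀ d) (x : E) {t : ℝ} (ht : 0 < t) :
    ((0 : E), t) ∈ interior (supportCone H x) := by
  obtain ⟨hT₀c, hT₀conv, hT₀0⟩ := hH.isGauge T₀ hT₀
  obtain ⟨r, hr, hT₀r⟩ := exists_pos_mul_norm_le_suppFn hT₀c ⟨0, hT₀0⟩ hpos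
  have hball := closedBall_subset_of_mul_norm_le_suppFn hT₀conv hT₀c.isClosed ⟨0, hT₀0⟩ hT₀r
  have hx := suppFn_nonneg hT₀c hT₀0 x
  -- `c • T₀` still contains a ball around `0`, and its support value at `x` is below `t`
  set c := t / (suppFn T₀ x + 1)
  have hc : 0 < c := by positivity
  have hcx : c * suppFn T₀ x < t := by
    rw [div_mul_eq_mul_div, div_lt_iff₀ (by positivity)]; nlinarith
  refine mem_interior_iff_mem_nhds.2 (Filter.mem_of_superset (prod_mem_nhds
    (ball_mem_nhds 0 (mul_pos hc hr)) (Ioi_mem_nhds hcx)) ?_)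
  rintro ⟨q, s⟩ ⟨hq, hs⟩
  refine ⟨c • T₀, hH.smul_mem T₀ hT₀ c hc.le, ?_, ?_⟩
  · rw [mem_smul_set_iff_inv_smul_mem₀ hc.ne']
    refine hball (mem_closedBall_zero_iff.2 ?_)
    rw [norm_smul, norm_inv, Real.norm_of_nonneg hc.le, inv_mul_le_iff₀ hc]
    exact (mem_ball_zero_iff.1 hq).le
  · rw [suppFn_smul_set hc.le]
    exact (mem_Ioi.1 hs).le

theorem mem_closure_supportCone (hH : IsGaugeCone H) (hT₀ : T₀ ∈ H)
    (hpos : ∀ d ≠ 0, 0 < suppFn T₀ d) {x u : E} {m : ℝ}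
    (hm : ∀ z ∈ dominated H x, ⟪u, z⟫ ≤ m) : (u, m) ∈ closure (supportCone H x) := by
  by_contra hum
  obtain ⟨f, hf, hfum⟩ := (convex_supportCone hH x).exists_nonpos_pos_of_notMem_closure
    (fun c hc _ => smul_mem_supportCone hH hc.le) (zero_mem_supportCone hH hT₀ le_rfl) hum
  set v := (InnerProductSpace.toDual ℝ E).symm (f.comp (ContinuousLinearMap.inl ℝ E ℝ))
  set s := f (0, 1)
  have hf_apply : ∀ z t, f (z, t) = ⟪v, z⟫ + t * s := fun z t => by
    have : ((z, t) : E × ℝ) = (z, 0) + t • (0, 1) := by ext <;> simp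
    rw [this, map_add, map_smul, smul_eq_mul]
    simp [v, s]
  have hs : s ≤ 0 := hf _ (zero_mem_supportCone hH hT₀ zero_le_one)
  have hv : ∀ T ∈ H, suppFn T v ≤ -s * suppFn T x := fun T hT =>
    suppFn_le ⟨0, (hH.isGauge T hT).2.2⟩ fun p hp => by
      have := hf (p, suppFn T x) ⟨T, hT, hp, le_rfl⟩
      rw [hf_apply] at this
      linarith
  have : ⟪v, u⟫ + m * s ≤ 0 := by
    rcases hs.lt_or_eq with hs | hs
    · have hdom : (-s)⁻¹ • v ∈ dominated H x := fun T hT => by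
        rw [suppFn_smul (inv_nonneg.2 (neg_nonneg.2 hs.le)), inv_mul_le_iff₀ (neg_pos.2 hs)]
        exact hv T hT
      have := hm _ hdom
      rw [real_inner_smul_right, inv_mul_le_iff₀ (neg_pos.2 hs), real_inner_comm] at this
      linarith
    · -- `T₀` contains a ball around `0`, so it cannot lie in the half-space `⟪v, ·⟫ ≤ 0`
      obtain ⟨hT₀c, -, hT₀0⟩ := hH.isGauge T₀ hT₀
      obtain ⟨r, hr, hT₀r⟩ := exists_pos_mul_norm_le_suppFn hT₀c ⟨0, hT₀0⟩ hpos
      have hv0 : r * ‖v‖ ≤ 0 := by simpa [hs] using (hT₀r v).trans (hv T₀ hT₀)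
      have : v = 0 := norm_le_zero_iff.1 (nonpos_of_mul_nonpos_right hv0 hr)
      simp [this, hs]
  rw [hf_apply] at hfum
  linarith

theorem exists_mem_suppFn_le_add (hH : IsGaugeCone H) (hT₀ : T₀ ∈ H)
    (hpos : ∀ d ≠ 0, 0 < suppFn T₀ d) {x u : E} {m : ℝ}
    (hm : ∀ z ∈ dominated H x, ⟪u, z⟫ ≤ m) {ε : ℝ} (hε : 0 < ε) :
    ∃ T ∈ H, u ∈ T ∧ suppFn T x ≤ m + ε := by
  simpa [supportCone] using (convex_supportCone hH x).add_mem_of_mem_closure_of_mem_interior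
    (fun c hc _ => smul_mem_supportCone hH hc.le) (mem_closure_supportCone hH hT₀ hpos hm)
    (mem_interior_supportCone hH hT₀ hpos x hε)

theorem inner_le_sum_suppFn_dominated {ι : Type*} [Fintype ι] [Nonempty ι] (hH : IsGaugeCone H)
    (hmeet : ∀ K ∈ H, ∀ L ∈ H, K ∩ L ∈ H) (hT₀ : T₀ ∈ H) (hpos : ∀ d ≠ 0, 0 < suppFn T₀ d)
    {y : E} {x : ι → E} (hyx : ∀ T ∈ H, suppFn T y ≤ ∑ k, suppFn T (x k)) (v : E) :
    ⟪v, y⟫ ≤ ∑ k, suppFn (dominated H (x k)) v := by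
  refine le_of_forall_pos_le_add fun ε hε => ?_
  have hδ : 0 < ε / Fintype.card ι := by positivity
  choose T hT hvT hTx using fun k => exists_mem_suppFn_le_add hH hT₀ hpos
    (fun z hz => inner_le_suppFn (isCompact_dominated hH.isGauge hT₀ hpos (x k)) hz v) hδ
  have hTH : ⋂ k, T k ∈ H := iInter_mem_of_inter_mem hmeet hT
  obtain ⟨hTc, -, hT0⟩ := hH.isGauge _ hTH
  calc ⟪v, y⟫ ≤ suppFn (⋂ k, T k) y :=
        real_inner_comm v y ▸ inner_le_suppFn hTc (mem_iInter.2 hvT) y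
    _ ≤ ∑ k, suppFn (⋂ k, T k) (x k) := hyx _ hTH
    _ ≤ ∑ k, (suppFn (dominated H (x k)) v + ε / Fintype.card ι) :=
        Finset.sum_le_sum fun k _ =>
          (suppFn_mono (hH.isGauge _ (hT k)).1 (iInter_subset T k) ⟨0, hT0⟩ _).trans (hTx k)
    _ = ∑ k, suppFn (dominated H (x k)) v + ε := by
        rw [Finset.sum_add_distrib, Finset.sum_const, Finset.card_univ, nsmul_eq_mul,
          mul_div_cancel₀ _ (by positivity)]

end GaugeCone

theorem meet_decomposition_general {N : ℕ}
    (H : Set (Set (EuclideanSpace ℝ (Fin N))))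
    (hg : ∀ K ∈ H, IsGauge K)
    (hadd : ∀ K ∈ H, ∀ L ∈ H, K + L ∈ H)
    (hsmul : ∀ K ∈ H, ∀ α : ℝ, 0 ≤ α → α • K ∈ H)
    (hmeet : ∀ K ∈ H, ∀ L ∈ H, K ∩ L ∈ H)
    (hpos : ∀ y : EuclideanSpace ℝ (Fin N), y ≠ 0 →
      ∀ T ∈ H, T ≠ ({0} : Set (EuclideanSpace ℝ (Fin N))) → 0 < suppFn T y)
    (n : ℕ) (y : EuclideanSpace ℝ (Fin N))
    (x : Fin (n + 1) → EuclideanSpace ℝ (Fin N)) :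
    (∀ T ∈ H, suppFn T y ≤ ∑ k, suppFn T (x k)) ↔
      ∃ z : Fin (n + 1) → EuclideanSpace ℝ (Fin N),
        (∑ k, z k) = y ∧
        ∀ T ∈ H, ∀ k, suppFn T (z k) ≤ suppFn T (x k) := by
  refine ⟨fun hyx => ?_, fun ⟨z, hzy, hzx⟩ T hT => ?_⟩
  · by_cases htriv : ∀ T ∈ H, T = {0}
    · exact ⟨Pi.single 0 y, by simp, fun T hT k => by simp [htriv T hT, suppFn_singleton_zero]⟩
    push Not at htriv
    obtain ⟨T₀, hT₀, hT₀ne⟩ := htriv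
    have hH : IsGaugeCone H := ⟨hg, hadd, hsmul⟩
    have hpos₀ := fun d hd => hpos d hd T₀ hT₀ hT₀ne
    have hC := fun k => isCompact_dominated hg hT₀ hpos₀ (x k)
    have hC0 := fun k => zero_mem_dominated hg (x k)
    have hy : y ∈ ∑ k, dominated H (x k) :=
      mem_of_forall_inner_le_suppFn (convex_sum _ fun k _ => convex_dominated hg (x k))
        (isCompact_finsetSum _ fun k _ => hC k).isClosed
        ⟨0, (mem_fintype_sum _ _).2 ⟨0, hC0, by simp⟩⟩ fun v =>
        (inner_le_sum_suppFn_dominated hH hmeet hT₀ hpos₀ hyx v).trans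
          (sum_suppFn_le_suppFn_sum hC (fun k => ⟨0, hC0 k⟩) v)
    obtain ⟨z, hz, hzy⟩ := (mem_fintype_sum _ _).1 hy
    exact ⟨z, hzy, fun T hT k => hz k T hT⟩
  · obtain ⟨hTc, -, hT0⟩ := hg T hT
    calc suppFn T y = suppFn T (∑ k, z k) := by rw [hzy]
      _ ≤ ∑ k, suppFn T (z k) := Finset.le_sum_of_subadditive _ (suppFn_zero ⟨0, hT0⟩).le
          (suppFn_add_le hTc ⟨0, hT0⟩) _ _
      _ ≤ ∑ k, suppFn T (x k) := Finset.sum_le_sum fun k _ => hzx T hT k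

/-- **Theorem 5.1.**  Let `H` be a Hausdorff-closed cone of gauges in `ℝ^N`
closed under intersection, such that for every nonzero `y` the support values
`h_T(y)` of nonzero `T ∈ H` are positive and
`S_y = ⋂_{T ∈ H, T ≠ {0}} (1/h_T(y)) • T` is absorbing.  Then
`Σ_k h_T(x k) ≥ h_T(y)` for all `T ∈ H` iff there are `z k` with `Σ z k = y`
and `h_T(x k) ≥ h_T(z k)` for all `T ∈ H` and all `k`. -/
theorem meet_decomposition {N : ℕ}
    (H : Set (Set (EuclideanSpace ℝ (Fin N))))
    (hg : ∀ K ∈ H, IsGauge K)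
    (hclosed : IsHausdorffClosed H)
    (hadd : ∀ K ∈ H, ∀ L ∈ H, K + L ∈ H)
    (hsmul : ∀ K ∈ H, ∀ α : ℝ, 0 ≤ α → α • K ∈ H)
    (hmeet : ∀ K ∈ H, ∀ L ∈ H, K ∩ L ∈ H)
    (hpos : ∀ y : EuclideanSpace ℝ (Fin N), y ≠ 0 →
      ∀ T ∈ H, T ≠ ({0} : Set (EuclideanSpace ℝ (Fin N))) → 0 < suppFn T y)
    (habs : ∀ y : EuclideanSpace ℝ (Fin N), y ≠ 0 →
      ∀ z : EuclideanSpace ℝ (Fin N), ∃ α : ℝ, 0 < α ∧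
        α • z ∈ ⋂ (T : Set (EuclideanSpace ℝ (Fin N))) (_ : T ∈ H)
          (_ : T ≠ ({0} : Set (EuclideanSpace ℝ (Fin N)))),
            (1 / suppFn T y) • T)
    (n : ℕ) (y : EuclideanSpace ℝ (Fin N))
    (x : Fin (n + 1) → EuclideanSpace ℝ (Fin N)) :
    (∀ T ∈ H, suppFn T y ≤ ∑ k, suppFn T (x k)) ↔
      ∃ z : Fin (n + 1) → EuclideanSpace ℝ (Fin N),
        (∑ k, z k) = y ∧
        ∀ T ∈ H, ∀ k, suppFn T (z k) ≤ suppFn T (x k) :=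
  meet_decomposition_general H hg hadd hsmul hmeet hpos n y x
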